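/- arXiv:1710.04081 — 3 statements merged into one kernel-verified Lean document; each statement's English description precedes it below -/
import Mathlib

section
/- Let 2N > 6 be an even integer and let p be a prime of type P relative to 2N. Then 2N − p is an integer of type P relative to 2N; that is, 1 < 2N − p < 2N − 2 and every prime factor of 2N − p is a prime of type P relative to 2N. -/
/-- `p` is a prime of type P relative to the even integer `n = 2N`:
`p` is prime, `3 ≤ p < n - 2`, and `p` does not divide `n`. -/
def PrimeTypeP (n p : ℕ) : Prop :=
  p.Prime ∧ 3 ≤ p ∧ p < n - 2 ∧ ¬ p ∣ n

/-- `a` is an integer of type P relative to the even integer `n = 2N`: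
`1 < a < n - 2` and every prime factor of `a` is a prime of type P relative to `n`. -/
def IntTypeP (n a : ℕ) : Prop :=
  1 < a ∧ a < n - 2 ∧ ∀ p : ℕ, p.Prime → p ∣ a → PrimeTypeP n p

/-- If `2N > 6` is even and `p` is a prime of type P relative to `2N`, then `2N - p`
is an integer of type P relative to `2N`. -/
theorem stmt_1 (n : ℕ) (hn : Even n) (h6 : 6 < n) (p : ℕ) (hp : PrimeTypeP n p) :
    IntTypeP n (n - p) := by
  obtain ⟨hpp, hp3, hplt, hpnd⟩ := hp
  have hpn : p < n := lt_of_lt_of_le hplt (Nat.sub_le _ _)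
  have h1 : 1 < n - p := by omega
  have h2 : n - p < n - 2 := by omega
  refine ⟨h1, h2, fun q hq hqd => ?_⟩
  -- n - p is odd since n is even and p is odd
  have hpodd : Odd p := hpp.odd_of_ne_two (by omega)
  have hnpodd : Odd (n - p) := by
    obtain ⟨k, hk⟩ := hn
    obtain ⟨m, hm⟩ := hpodd
    exact ⟨k - m - 1, by omega⟩
  have hq2 : q ≠ 2 := by
    rintro rfl
    exact (Nat.not_even_iff_odd.mpr hnpodd) (even_iff_two_dvd.mpr hqd)
  have hq3 : 3 ≤ q := by
    have := hq.two_le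
    omega
  have hqle : q ≤ n - p := Nat.le_of_dvd (by omega) hqd
  have hqnd : ¬ q ∣ n := by
    intro hqn
    have hqp : q ∣ p := by
      have : q ∣ n - (n - p) := Nat.dvd_sub hqn hqd
      rwa [Nat.sub_sub_self (le_of_lt hpn)] at this
    have : q = p := (Nat.prime_dvd_prime_iff_eq hq hpp).mp hqp
    exact hpnd (this ▸ hqn)
  exact ⟨hq, hq3, by omega, hqnd⟩
end

section
/- Let 2N > 6 be an even integer, let P_1 denote the smallest prime of type P relative to 2N (which exists), and let a be any integer of type P relative to 2N. Then a ≤ 2N − P_1; that is, 2N − P_1 is the greatest integer of type P relative to 2N. -/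
lemma Nat.exists_prime_not_dvd_two_mul_of_not_prime {N : ℕ} (hN : 3 ≤ N) (hNp : ¬ N.Prime) :
    ∃ q, q.Prime ∧ 3 ≤ q ∧ q < 2 * N - 2 ∧ ¬ q ∣ 2 * N := by
  obtain ⟨q, hq, hlt, hle⟩ := Nat.exists_prime_lt_and_le_two_mul (N - 1) (by omega)
  have hNq : N < q := lt_of_le_of_ne (by omega) fun h => hNp (h ▸ hq)
  obtain ⟨k, rfl⟩ := hq.odd_of_ne_two (by omega)
  refine ⟨2 * k + 1, hq, by omega, by omega, ?_⟩
  rintro ⟨m, hm⟩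
  rcases m with _ | _ | m
  · omega
  · omega
  · nlinarith

lemma exists_primeTypeP {n : ℕ} (hn : Even n) (h6 : 6 < n) : ∃ p, PrimeTypeP n p := by
  by_cases h3 : 3 ∣ n
  · obtain ⟨N, rfl⟩ := hn
    rw [← two_mul] at h3 ⊢
    have h3N : 3 ∣ N := Nat.Coprime.dvd_of_dvd_mul_left (by norm_num) h3
    have hNp : ¬ N.Prime := fun hp => by
      have := (Nat.prime_dvd_prime_iff_eq Nat.prime_three hp).mp h3N
      omega
    exact Nat.exists_prime_not_dvd_two_mul_of_not_prime (by omega) hNp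
  · exact ⟨3, Nat.prime_three, le_rfl, by omega, h3⟩

lemma IntTypeP.coprime {n a : ℕ} (ha : IntTypeP n a) : a.Coprime n :=
  Nat.coprime_of_dvd fun p hp hpa => (ha.2.2 p hp hpa).2.2.2

lemma primeTypeP_minFac {n d : ℕ} (hn : Even n) (hd : d.Coprime n) (h1 : 1 < d)
    (hdn : d < n - 2) : PrimeTypeP n d.minFac := by
  have hp : d.minFac.Prime := Nat.minFac_prime (by omega)
  have hpn : ¬ d.minFac ∣ n := fun h =>
    hp.one_lt.ne' (Nat.eq_one_of_dvd_coprimes hd (Nat.minFac_dvd d) h)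
  have hp2 : d.minFac ≠ 2 := fun h => hpn (h ▸ hn.two_dvd)
  exact ⟨hp, by have := hp.two_le; omega,
    lt_of_le_of_lt (Nat.minFac_le (by omega)) hdn, hpn⟩

lemma IntTypeP.le_sub {n a P : ℕ} (hn : Even n) (hP : ∀ p, PrimeTypeP n p → P ≤ p)
    (ha : IntTypeP n a) : a ≤ n - P := by
  have hcop := ha.coprime
  obtain ⟨ha1, han, -⟩ := ha
  have ha3 : 3 ≤ a := by
    obtain ⟨k, rfl⟩ := Nat.coprime_two_right.mp (hcop.coprime_dvd_right hn.two_dvd)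
    omega
  have hd : (n - a).Coprime n := (Nat.coprime_self_sub_left (by omega)).mpr hcop
  have hPd : P ≤ n - a := calc
    P ≤ (n - a).minFac := hP _ (primeTypeP_minFac hn hd (by omega) (by omega))
    _ ≤ n - a := Nat.minFac_le (by omega)
  omega

/-- For even `2N > 6`, the smallest prime `P₁` of type P relative to `2N` exists, and
every integer `a` of type P relative to `2N` satisfies `a ≤ 2N - P₁`;
that is, `2N - P₁` is the greatest integer of type P relative to `2N`. -/
theorem stmt_2 (n : ℕ) (hn : Even n) (h6 : 6 < n) :
    ∃ P₁ : ℕ, PrimeTypeP n P₁ ∧ (∀ p : ℕ, PrimeTypeP n p → P₁ ≤ p) ∧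
      ∀ a : ℕ, IntTypeP n a → a ≤ n - P₁ := by
  classical
  have hex := exists_primeTypeP hn h6
  have hmin : ∀ p, PrimeTypeP n p → Nat.find hex ≤ p := fun _ => Nat.find_min' hex
  exact ⟨Nat.find hex, Nat.find_spec hex, hmin, fun _ ha => ha.le_sub hn hmin⟩
end

section
/- The function f(x) = x / (1.781·ln(ln x) + 3/ln(ln x)) − 2 − 2.510·x / ln x is strictly increasing on the interval (10^6, ∞). -/
/-!
Write `t = ln x`, `L = ln t` and `D(L) = 1.781 L + 3 / L`. A direct computation gives
`t · D(L) · f'(x) = t - 2.510 · D(L) · (t - 1) / t - D'(L) / D(L)`.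
For `x > 10^6` we have `t > 6 ln 10 > 13.8155`. The log-derivative `D'/D` never exceeds `0.232`,
and bounding `L` above by the tangent line of `ln` at `27/2` turns the positivity of the right-hand
side into a quadratic inequality in `t`. At `t = 13.8155` the margin is only about `0.03`, which is
why `ln 2`, `ln 3` and `ln 5` are needed to nine digits.
-/

open Real

noncomputable def loglogDenom (L : ℝ) : ℝ := 1.781 * L + 3 / L

lemma loglogDenom_pos {L : ℝ} (hL : 0 < L) : 0 < loglogDenom L := by
  unfold loglogDenom; positivity

lemma hasDerivAt_loglogDenom {L : ℝ} (hL : L ≠ 0) :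
    HasDerivAt loglogDenom (1.781 - 3 / L ^ 2) L := by
  show HasDerivAt (fun y => 1.781 * y + 3 / y) _ L
  exact (((hasDerivAt_id' L).const_mul 1.781).fun_add
    ((hasDerivAt_const L 3).fun_div (hasDerivAt_id' L) hL)).congr_deriv (by ring)

lemma loglogDenom_deriv_div_le {L : ℝ} (hL : 0 < L) :
    (1.781 - 3 / L ^ 2) / loglogDenom L ≤ 0.232 := by
  rw [div_le_iff₀ (loglogDenom_pos hL), loglogDenom, ← sub_nonneg]
  have hpoly : 0.232 * (1.781 * L + 3 / L) - (1.781 - 3 / L ^ 2)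
      = (0.413192 * L ^ 3 - 1.781 * L ^ 2 + 0.696 * L + 3) / L ^ 2 := by
    field_simp; ring
  rw [hpoly]
  -- the maximum of the log-derivative, about `0.2314`, is attained near `L = 2.67`
  exact div_nonneg (by nlinarith [mul_nonneg hL.le (sq_nonneg (L - 2.67)), sq_nonneg (L - 2.67)])
    (by positivity)

lemma log_le_log_add_div_sub_one {a t : ℝ} (ha : 0 < a) (ht : 0 < t) :
    log t ≤ log a + t / a - 1 := by
  have h := log_le_sub_one_of_pos (div_pos ht ha)
  rw [log_div ht.ne' ha.ne'] at h
  linarith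

lemma log_twentySeven_div_two_mem_Ioo : log (27 / 2) ∈ Set.Ioo 2.6026896 2.6026897 := by
  rw [log_div (by norm_num) (by norm_num), show (27 : ℝ) = 3 ^ 3 by norm_num, log_pow]
  constructor <;> norm_num <;>
    linarith [log_two_gt_d9, log_two_lt_d9, log_three_gt_d9, log_three_lt_d9]

lemma lt_log_ten_pow_six : 13.8155 < log (10 ^ 6) := by
  rw [log_pow, log_ten_eq]
  linarith [log_two_gt_d9, log_five_gt_d9]

-- `27/2` is just below `13.8155` and `ln (27/2) = 3 ln 3 - ln 2` is known precisely.
lemma mul_loglogDenom_log_add_deriv_div_lt {t : ℝ} (ht : 13.8155 ≤ t) :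
    2.510 * loglogDenom (log t) * (t - 1) / t + (1.781 - 3 / log t ^ 2) / loglogDenom (log t)
      < t := by
  have ht0 : 0 < t := by linarith
  have h27 := log_twentySeven_div_two_mem_Ioo
  have hL_lo : 2.6026896 ≤ log t := h27.1.le.trans (log_le_log (by norm_num) (by linarith))
  have hL_hi : log t ≤ 1.6026897 + 2 * t / 27 := by
    linarith [h27.2, log_le_log_add_div_sub_one (a := 27 / 2) (by norm_num) ht0]
  have hD : loglogDenom (log t) ≤ 1.781 * (1.6026897 + 2 * t / 27) + 3 / 2.6026896 := by
    unfold loglogDenom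
    gcongr
  have hquad : 2.510 * (1.781 * (1.6026897 + 2 * t / 27) + 3 / 2.6026896) * (t - 1) / t + 0.232
      < t := by
    rw [div_add' _ _ _ ht0.ne', div_lt_iff₀ ht0]
    nlinarith
  have hfirst : 2.510 * loglogDenom (log t) * (t - 1) / t
      ≤ 2.510 * (1.781 * (1.6026897 + 2 * t / 27) + 3 / 2.6026896) * (t - 1) / t := by
    gcongr
    linarith
  linarith [loglogDenom_deriv_div_le (by linarith : 0 < log t)]

lemma hasDerivAt_div_loglogDenom_sub_two_sub {x : ℝ} (hx : 0 < log (log x)) :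
    HasDerivAt (fun y => y / loglogDenom (log (log y)) - 2 - 2.510 * y / log y)
      ((log x - (2.510 * loglogDenom (log (log x)) * (log x - 1) / log x
          + (1.781 - 3 / log (log x) ^ 2) / loglogDenom (log (log x))))
        / (log x * loglogDenom (log (log x)))) x := by
  have hlog : log x ≠ 0 := fun h => by simp [h] at hx
  have hx0 : x ≠ 0 := fun h => by simp [h] at hlog
  have hlog' : HasDerivAt log x⁻¹ x := hasDerivAt_log hx0
  have hD0 : loglogDenom (log (log x)) ≠ 0 := (loglogDenom_pos hx).ne'
  have hD := (hasDerivAt_loglogDenom hx.ne').comp x (hlog'.log hlog)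
  refine ((((hasDerivAt_id' x).fun_div hD hD0).sub_const 2).fun_sub
    (((hasDerivAt_id' x).const_mul 2.510).fun_div hlog' hlog)).congr_deriv ?_
  simp only [Function.comp_apply]
  field_simp
  ring

/-- The function `f(x) = x / (1.781·ln(ln x) + 3 / ln(ln x)) - 2 - 2.510·x / ln x`
is strictly increasing on the interval `(10^6, ∞)`. -/
theorem stmt_8 :
    StrictMonoOn
      (fun x : ℝ =>
        x / (1.781 * Real.log (Real.log x) + 3 / Real.log (Real.log x)) - 2
          - 2.510 * x / Real.log x)
      (Set.Ioi (10 ^ 6 : ℝ)) := by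
  show StrictMonoOn (fun x => x / loglogDenom (log (log x)) - 2 - 2.510 * x / log x) _
  have hlog {x : ℝ} (hx : x ∈ Set.Ioi (10 ^ 6 : ℝ)) : 13.8155 < log x :=
    lt_log_ten_pow_six.trans (log_lt_log (by norm_num) hx)
  have hloglog {x : ℝ} (hx : x ∈ Set.Ioi (10 ^ 6 : ℝ)) : 0 < log (log x) :=
    log_pos (by linarith [hlog hx])
  have hderiv {x : ℝ} (hx : x ∈ Set.Ioi (10 ^ 6 : ℝ)) :=
    hasDerivAt_div_loglogDenom_sub_two_sub (hloglog hx)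
  refine strictMonoOn_of_deriv_pos (convex_Ioi _)
    (fun x hx => (hderiv hx).continuousAt.continuousWithinAt) fun x hx => ?_
  rw [interior_Ioi] at hx
  rw [(hderiv hx).deriv]
  exact div_pos (by linarith [mul_loglogDenom_log_add_deriv_div_lt (hlog hx).le])
    (mul_pos (by linarith [hlog hx]) (loglogDenom_pos (hloglog hx)))
end
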